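/- arXiv:2309.07703 — 3 statements merged into one kernel-verified Lean document; each statement's English description precedes it below -/
import Mathlib

section
/- There exist a finite set R_X, probability distributions p_Y and (p_Y^{do(X=x)})_{x ∈ R_X} on a finite set R_Y, and some x with p_Y^{do(X=x)} ≠ p_Y (so X has a total causal effect on Y), yet for every probability distribution p_{X'} on R_X the causal entropy ∑_x p_{X'}(x) H(p_Y^{do(X=x)}) equals H(p_Y). In particular, equality of causal entropy and entropy does not imply absence of total causal effect. -/
open Finset


/-- Base-2 Shannon entropy of a finitely supported distribution. -/
noncomputable def entropy {α : Type*} [Fintype α] (p : α → ℝ) : ℝ :=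
  -∑ y, p y * Real.logb 2 (p y)

/-- `p` is a probability distribution on the finite type `α`. -/
def IsDist {α : Type*} [Fintype α] (p : α → ℝ) : Prop :=
  (∀ a, 0 ≤ p a) ∧ ∑ a, p a = 1

/-- There exist distributions `pY` and post-intervention distributions `pdo x` on a finite set
such that `X` has a total causal effect on `Y` (some `pdo x ≠ pY`), yet for every intervention
protocol the causal entropy equals the entropy `H(pY)`. -/
theorem exists_total_effect_with_causal_entropy_eq_entropy :
    ∃ (pY : Fin 2 → ℝ) (pdo : Fin 2 → Fin 2 → ℝ),
      IsDist pY ∧ (∀ x, IsDist (pdo x)) ∧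
      (∃ x, pdo x ≠ pY) ∧
      (∀ pX' : Fin 2 → ℝ, IsDist pX' →
        ∑ x, pX' x * entropy (pdo x) = entropy pY) := by
  refine ⟨![1/4, 3/4], fun _ => ![3/4, 1/4], ⟨?_, ?_⟩, fun x => ⟨?_, ?_⟩, ⟨0, ?_⟩, ?_⟩
  · intro a; fin_cases a <;> norm_num
  · simp [Fin.sum_univ_two]; norm_num
  · intro a; fin_cases a <;> norm_num
  · simp [Fin.sum_univ_two]; norm_num
  · intro h
    have := congrFun h 0
    norm_num at this
  · intro pX' ⟨_, hs⟩
    have he : entropy (![3/4, 1/4] : Fin 2 → ℝ) = entropy (![1/4, 3/4] : Fin 2 → ℝ) := by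
      simp [entropy, Fin.sum_univ_two]; ring
    simp only [he]
    rw [← Finset.sum_mul, hs, one_mul]
end

section
/- There exist distributions p_Y on {0,1} and post-intervention distributions p_Y^{do(X=x)} on {0,1} such that X has a total causal effect on Y (p_Y^{do(X=1)} ≠ p_Y) but the causal information gain I_c(Y | do(X ~ X')) = 0 for every intervention protocol X'. Hence nonzero causal information gain is not necessary for total causal effect. -/
open Finset


/-- There exist a distribution `pY` on `{0,1}` and post-intervention distributions `pdo x` such
that `X` has a total causal effect on `Y` (`pdo 1 ≠ pY`) but the causal information gain is zero
for every intervention protocol. Nonzero causal information gain is not necessary for effect. -/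
theorem exists_total_effect_with_zero_causal_information_gain :
    ∃ (pY : Fin 2 → ℝ) (pdo : Fin 2 → Fin 2 → ℝ),
      IsDist pY ∧ (∀ x, IsDist (pdo x)) ∧
      pdo 1 ≠ pY ∧
      (∀ pX' : Fin 2 → ℝ, IsDist pX' →
        entropy pY - ∑ x, pX' x * entropy (pdo x) = 0) := by
  refine ⟨![3/4, 1/4], fun _ => ![1/4, 3/4], ?_, ?_, ?_, ?_⟩
  · constructor
    · intro a; fin_cases a <;> norm_num
    · simp [Fin.sum_univ_two]; norm_num
  · intro x
    constructor
    · intro a; fin_cases a <;> norm_num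
    · simp [Fin.sum_univ_two]; norm_num
  · intro h
    have := congrFun h 0
    norm_num at this
  · intro pX' hpX'
    have hE : entropy (![1/4, 3/4] : Fin 2 → ℝ) = entropy (![3/4, 1/4] : Fin 2 → ℝ) := by
      simp [entropy, Fin.sum_univ_two]; ring
    have : ∑ x : Fin 2, pX' x * entropy ((fun _ => ![1/4, 3/4]) x : Fin 2 → ℝ)
        = entropy (![3/4, 1/4] : Fin 2 → ℝ) := by
      rw [Fin.sum_univ_two]
      rw [hE]
      have hs := hpX'.2
      rw [Fin.sum_univ_two] at hs
      rw [← add_mul, hs, one_mul]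
    rw [this]; ring
end

section
/- In the ice-cream SCM, for every intervention protocol X₁' for X₁ and X₂' for X₂, the causal information gain satisfies I_c(Y | do(X₂ ~ X₂')) > I_c(Y | do(X₁ ~ X₁')), even though the mutual informations satisfy the opposite strict inequality I(Y; X₁) > I(Y; X₂). -/
open Finset

/-- Joint weight of the noises `(N_W, N_{X₂}, N_{X₁})`, independent with
`N_W ~ Bernoulli(1/2)`, `N_{X₂} ~ Bernoulli(1/4)`, `N_{X₁} ~ Bernoulli(1/64)`. -/
noncomputable def iceWeight3 (ω : Bool × Bool × Bool) : ℝ :=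
  (if ω.1 then (1:ℝ)/2 else 1/2) * (if ω.2.1 then (1:ℝ)/4 else 3/4) *
    (if ω.2.2 then (1:ℝ)/64 else 63/64)

/-- Value of `Y = X₂ + W` (the assignments `W = N_W`, `X₂ = N_{X₂}` are identities). -/
def iceY3 (ω : Bool × Bool × Bool) : ℕ := (if ω.2.1 then 1 else 0) + (if ω.1 then 1 else 0)

/-- Value of `X₁ = W + N_{X₁}`. -/
def iceX1 (ω : Bool × Bool × Bool) : ℕ := (if ω.1 then 1 else 0) + (if ω.2.2 then 1 else 0)

/-- Observational distribution of `Y` on `{0,1,2}`. -/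
noncomputable def icePY3 : Fin 3 → ℝ := fun y =>
  ∑ ω ∈ Finset.univ.filter (fun ω : Bool × Bool × Bool => iceY3 ω = (y : ℕ)), iceWeight3 ω

/-- Post-intervention distribution of `Y` under `do(X₁ = x₁)`: the structural assignments of
`W`, `X₂` and `Y` are unchanged, so `Y` is still computed as `X₂ + W` from the same noises. -/
noncomputable def icePdoX1 (_x₁ : Fin 3) : Fin 3 → ℝ := fun y =>
  ∑ ω ∈ Finset.univ.filter (fun ω : Bool × Bool × Bool => iceY3 ω = (y : ℕ)), iceWeight3 ω

/-- Post-intervention distribution of `Y` under `do(X₂ = x₂)`: `Y = x₂ + W`. -/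
noncomputable def icePdoX2 (x₂ : Bool) : Fin 3 → ℝ := fun y =>
  ∑ ω ∈ Finset.univ.filter (fun ω : Bool × Bool × Bool =>
      ((if x₂ then 1 else 0) + (if ω.1 then 1 else 0) : ℕ) = (y : ℕ)), iceWeight3 ω

/-- `P(X₁ = x)`. -/
noncomputable def icePX1 (x : Fin 3) : ℝ :=
  ∑ ω ∈ Finset.univ.filter (fun ω : Bool × Bool × Bool => iceX1 ω = (x : ℕ)), iceWeight3 ω

/-- `P(X₂ = x)`. -/
noncomputable def icePX2 (x : Bool) : ℝ :=
  ∑ ω ∈ Finset.univ.filter (fun ω : Bool × Bool × Bool => ω.2.1 = x), iceWeight3 ω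

/-- Conditional distribution of `Y` given `X₁ = x`. -/
noncomputable def iceCondYX1 (x : Fin 3) : Fin 3 → ℝ := fun y =>
  (∑ ω ∈ Finset.univ.filter (fun ω : Bool × Bool × Bool =>
      iceY3 ω = (y : ℕ) ∧ iceX1 ω = (x : ℕ)), iceWeight3 ω) / icePX1 x

/-- Conditional distribution of `Y` given `X₂ = x`. -/
noncomputable def iceCondYX2 (x : Bool) : Fin 3 → ℝ := fun y =>
  (∑ ω ∈ Finset.univ.filter (fun ω : Bool × Bool × Bool =>
      iceY3 ω = (y : ℕ) ∧ ω.2.1 = x), iceWeight3 ω) / icePX2 x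

/-- Mutual information `I(Y; X₁) = H(Y) - H(Y | X₁)`. -/
noncomputable def iceMIX1 : ℝ :=
  entropy icePY3 - ∑ x : Fin 3, icePX1 x * entropy (iceCondYX1 x)

/-- Mutual information `I(Y; X₂) = H(Y) - H(Y | X₂)`. -/
noncomputable def iceMIX2 : ℝ :=
  entropy icePY3 - ∑ x : Bool, icePX2 x * entropy (iceCondYX2 x)

/-! `X₁` is not an ancestor of `Y`, so `do(X₁ = x₁)` leaves the law of `Y` unchanged and its
causal information gain is `0`; under `do(X₂ = x₂)` we get `Y = x₂ + W`, of entropy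
`1 < H(Y)`. Since `X₂` is unconfounded, conditioning on `X₂` gives the same law as intervening
on it, so `I(Y; X₂) = H(Y) - 1` as well. But `X₁` is a noisy copy of the confounder `W`, and
revealing `W` tells more about `Y = X₂ + W` than revealing `X₂`:
`H(Y | X₁) ≈ 0.85 < 1 = H(Y | X₂)`. -/

open Real

lemma IsDist.sum_mul_const {α : Type*} [Fintype α] {p : α → ℝ} (hp : IsDist p) (c : ℝ) :
    ∑ a, p a * c = c := by
  rw [← Finset.sum_mul, hp.2, one_mul]

lemma entropy_fin_three (a b c : ℝ) :
    entropy ![a, b, c] = -(a * logb 2 a + b * logb 2 b + c * logb 2 c) := by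
  simp [entropy, Fin.sum_univ_three]

lemma mul_logb_two_div_two_pow (a : ℝ) (k : ℕ) :
    a / 2 ^ k * logb 2 (a / 2 ^ k) = a / 2 ^ k * (logb 2 a - k) := by
  rcases eq_or_ne a 0 with rfl | ha
  · simp
  · rw [logb_div ha (by positivity), logb_pow, logb_self_eq_one one_lt_two, mul_one]

lemma div_lt_logb_of_pow_lt {b x : ℝ} (hb : 1 < b) {p q : ℕ} (hq : 0 < q)
    (h : b ^ p < x ^ q) : (p : ℝ) / q < logb b x := by
  have hlog := logb_lt_logb hb (by positivity) h
  rw [logb_pow, logb_pow, logb_self_eq_one hb, mul_one] at hlog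
  rw [div_lt_iff₀ (by exact_mod_cast hq)]
  linarith

lemma logb_two_three_lt_two : logb 2 3 < 2 := by
  have h := logb_lt_logb one_lt_two (by norm_num) (show (3 : ℝ) < 2 ^ 2 by norm_num)
  rwa [logb_pow, logb_self_eq_one one_lt_two, mul_one, Nat.cast_ofNat] at h

lemma icePY3_eq : icePY3 = ![3 / 2 ^ 3, 1 / 2 ^ 1, 1 / 2 ^ 3] := by
  funext y; fin_cases y <;>
  simp only [icePY3, Finset.sum_filter, Fintype.sum_prod_type, Fintype.sum_bool] <;>
  norm_num [iceY3, iceWeight3]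

lemma icePdoX2_eq (b : Bool) :
    icePdoX2 b = if b then ![0, 1 / 2 ^ 1, 1 / 2 ^ 1] else ![1 / 2 ^ 1, 1 / 2 ^ 1, 0] := by
  funext y; cases b <;> fin_cases y <;>
  simp only [icePdoX2, Finset.sum_filter, Fintype.sum_prod_type, Fintype.sum_bool] <;>
  norm_num [iceWeight3]

lemma icePdoX1_eq_icePY3 (x : Fin 3) : icePdoX1 x = icePY3 := rfl

lemma iceCondYX2_eq_icePdoX2 : iceCondYX2 = icePdoX2 := by
  funext b y; cases b <;> fin_cases y <;>
  simp only [iceCondYX2, icePdoX2, icePX2, Finset.sum_filter, Fintype.sum_prod_type,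
    Fintype.sum_bool] <;>
  norm_num [iceY3, iceWeight3]

lemma icePX1_eq : icePX1 = ![63 / 128, 1 / 2, 1 / 128] := by
  funext x; fin_cases x <;>
  simp only [icePX1, Finset.sum_filter, Fintype.sum_prod_type, Fintype.sum_bool] <;>
  norm_num [iceX1, iceWeight3]

lemma icePX2_eq (b : Bool) : icePX2 b = if b then 1 / 4 else 3 / 4 := by
  cases b <;>
  simp only [icePX2, Finset.sum_filter, Fintype.sum_prod_type, Fintype.sum_bool] <;>
  norm_num [iceWeight3]

lemma iceCondYX1_zero : iceCondYX1 0 = ![3 / 2 ^ 2, 1 / 2 ^ 2, 0] := by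
  funext y; fin_cases y <;>
  simp only [iceCondYX1, icePX1, Finset.sum_filter, Fintype.sum_prod_type, Fintype.sum_bool] <;>
  norm_num [iceY3, iceX1, iceWeight3]

lemma iceCondYX1_one : iceCondYX1 1 = ![3 / 2 ^ 8, 95 / 2 ^ 7, 63 / 2 ^ 8] := by
  funext y; fin_cases y <;>
  simp only [iceCondYX1, icePX1, Finset.sum_filter, Fintype.sum_prod_type, Fintype.sum_bool] <;>
  norm_num [iceY3, iceX1, iceWeight3]

lemma iceCondYX1_two : iceCondYX1 2 = ![0, 3 / 2 ^ 2, 1 / 2 ^ 2] := by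
  funext y; fin_cases y <;>
  simp only [iceCondYX1, icePX1, Finset.sum_filter, Fintype.sum_prod_type, Fintype.sum_bool] <;>
  norm_num [iceY3, iceX1, iceWeight3]

lemma entropy_icePY3 : entropy icePY3 = 2 - 3 / 8 * logb 2 3 := by
  rw [icePY3_eq, entropy_fin_three]
  simp only [mul_logb_two_div_two_pow, logb_one]
  push_cast; ring

lemma entropy_icePdoX2 (b : Bool) : entropy (icePdoX2 b) = 1 := by
  cases b <;>
  · rw [icePdoX2_eq]
    simp only [Bool.false_eq_true, if_true, if_false, entropy_fin_three,
      mul_logb_two_div_two_pow, logb_one, zero_mul]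
    norm_num

lemma entropy_iceCondYX1_zero : entropy (iceCondYX1 0) = 2 - 3 / 4 * logb 2 3 := by
  rw [iceCondYX1_zero, entropy_fin_three]
  simp only [mul_logb_two_div_two_pow, logb_one, zero_mul]
  push_cast; ring

lemma entropy_iceCondYX1_two : entropy (iceCondYX1 2) = 2 - 3 / 4 * logb 2 3 := by
  rw [iceCondYX1_two, entropy_fin_three]
  simp only [mul_logb_two_div_two_pow, logb_one, zero_mul]
  push_cast; ring

lemma entropy_iceCondYX1_one : entropy (iceCondYX1 1) =
    (3 * (8 - logb 2 3) + 190 * (7 - logb 2 95) + 63 * (8 - logb 2 63)) / 2 ^ 8 := by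
  rw [iceCondYX1_one, entropy_fin_three]
  simp only [mul_logb_two_div_two_pow]
  push_cast; ring

lemma sum_icePX1_mul_entropy_iceCondYX1_lt_one : ∑ x, icePX1 x * entropy (iceCondYX1 x) < 1 := by
  -- the sum is `≈ 0.85`, but these bounds on the logarithms only show it is `< 0.9986`
  have h3 : (19 : ℝ) / 12 < logb 2 3 := by
    exact_mod_cast div_lt_logb_of_pow_lt one_lt_two (p := 19) (q := 12) (by norm_num) (by norm_num)
  have h95 : (13 : ℝ) / 2 < logb 2 95 := by
    exact_mod_cast div_lt_logb_of_pow_lt one_lt_two (p := 13) (q := 2) (by norm_num) (by norm_num)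
  have h63 : (5 : ℝ) / 1 < logb 2 63 := by
    exact_mod_cast div_lt_logb_of_pow_lt one_lt_two (p := 5) (q := 1) (by norm_num) (by norm_num)
  rw [Fin.sum_univ_three, entropy_iceCondYX1_zero, entropy_iceCondYX1_one,
    entropy_iceCondYX1_two, icePX1_eq]
  simp only [Matrix.cons_val]
  linarith

lemma sum_icePX2_mul_entropy_iceCondYX2 : ∑ x, icePX2 x * entropy (iceCondYX2 x) = 1 := by
  simp only [iceCondYX2_eq_icePdoX2, entropy_icePdoX2, Fintype.sum_bool, icePX2_eq]
  norm_num

/-- In the ice-cream SCM, for all intervention protocols `X₁'`, `X₂'`, the causal information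
gain satisfies `I_c(Y | do(X₂ ~ X₂')) > I_c(Y | do(X₁ ~ X₁'))`, even though the mutual
informations satisfy the opposite strict inequality `I(Y; X₁) > I(Y; X₂)`. -/
theorem ice_cream_Ic_vs_MI :
    (∀ (pX₁' : Fin 3 → ℝ) (pX₂' : Bool → ℝ), IsDist pX₁' → IsDist pX₂' →
      entropy icePY3 - ∑ x₂ : Bool, pX₂' x₂ * entropy (icePdoX2 x₂)
        > entropy icePY3 - ∑ x₁ : Fin 3, pX₁' x₁ * entropy (icePdoX1 x₁)) ∧
    iceMIX1 > iceMIX2 := by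
  constructor
  · intro p₁ p₂ hp₁ hp₂
    have hY : entropy icePY3 > 1 := by
      rw [entropy_icePY3]; linarith [logb_two_three_lt_two]
    simp only [entropy_icePdoX2, icePdoX1_eq_icePY3, hp₁.sum_mul_const, hp₂.sum_mul_const]
    linarith
  · have := sum_icePX1_mul_entropy_iceCondYX1_lt_one
    rw [gt_iff_lt, iceMIX1, iceMIX2, sum_icePX2_mul_entropy_iceCondYX2]
    linarith
end
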